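/- arXiv:1606.00157 — 2 statements merged into one kernel-verified Lean document; each statement's English description precedes it below -/
import Mathlib

section
/- With the same assumptions as in the zero-temperature limit of the tempered distribution (f continuous, bounded by R_max, f^{1/T} integrable, S_opt of positive finite measure, concentration hypothesis), the expected reward at temperature T, defined as E[R_T] = ∫ f(θ) · f(θ)^{1/T} dθ / ∫ f(θ)^{1/T} dθ, satisfies lim_{T→0} E[R_T] = R_max. -/
/-!
Write `Z β = ∫ f^β` and `N β = ∫ f · f^β`, so that `E[R_T] = N β / Z β` with `β = 1/T`. Clearly
`N ≤ R_max Z`. For `0 < r < R_max` and a fixed `β₀` with `f^β₀` integrable, the pointwise bound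
`f · f^β ≥ r f^β - r r^(β-β₀) f^β₀` gives `N ≥ r Z - r r^(β-β₀) ∫ f^β₀`, while
`Z ≥ R_max^β |S_opt|`. Hence `N / Z ≥ r - C (r / R_max)^β`, which tends to `r` as `β → ∞`.
-/

open MeasureTheory Filter Topology

lemma Real.rpow_le_rpow_sub_mul_rpow {x r β₀ β : ℝ} (hx : 0 ≤ x) (hxr : x ≤ r) (hβ₀ : 0 ≤ β₀)
    (hβ : β₀ ≤ β) : x ^ β ≤ r ^ (β - β₀) * x ^ β₀ := by
  calc x ^ β = x ^ (β - β₀) * x ^ β₀ := by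
        rw [← Real.rpow_add_of_nonneg hx (by linarith) hβ₀, sub_add_cancel]
    _ ≤ r ^ (β - β₀) * x ^ β₀ := by gcongr

section TemperedMoments

variable {α : Type*} [MeasurableSpace α] {μ : Measure α} {f : α → ℝ} {R r β₀ β : ℝ}

lemma integral_mul_rpow_le_mul_integral_rpow (hf0 : ∀ x, 0 ≤ f x) (hfR : ∀ x, f x ≤ R)
    (hi : Integrable (fun x => f x ^ β) μ) :
    ∫ x, f x * f x ^ β ∂μ ≤ R * ∫ x, f x ^ β ∂μ := by
  rw [← integral_const_mul]
  refine integral_mono_of_nonneg (ae_of_all _ fun x => ?_) (hi.const_mul R)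
    (ae_of_all _ fun x => ?_)
  · exact mul_nonneg (hf0 x) (Real.rpow_nonneg (hf0 x) β)
  · exact mul_le_mul_of_nonneg_right (hfR x) (Real.rpow_nonneg (hf0 x) β)

lemma rpow_mul_measureReal_le_integral_rpow (hS : MeasurableSet {x | f x = R})
    (hf0 : ∀ x, 0 ≤ f x) (hi : Integrable (fun x => f x ^ β) μ) :
    R ^ β * μ.real {x | f x = R} ≤ ∫ x, f x ^ β ∂μ := by
  calc R ^ β * μ.real {x | f x = R} = ∫ x in {x | f x = R}, f x ^ β ∂μ := by
        rw [setIntegral_congr_fun hS fun x (hx : f x = R) => by rw [hx], setIntegral_const,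
          smul_eq_mul, mul_comm]
    _ ≤ ∫ x, f x ^ β ∂μ :=
        setIntegral_le_integral hi (ae_of_all _ fun x => Real.rpow_nonneg (hf0 x) β)

lemma mul_sub_le_integral_mul_rpow (hf0 : ∀ x, 0 ≤ f x) (hr : 0 ≤ r) (hβ₀ : 0 ≤ β₀)
    (hβ : β₀ ≤ β) (hi₀ : Integrable (fun x => f x ^ β₀) μ) (hi : Integrable (fun x => f x ^ β) μ)
    (hi' : Integrable (fun x => f x * f x ^ β) μ) :
    r * ((∫ x, f x ^ β ∂μ) - r ^ (β - β₀) * ∫ x, f x ^ β₀ ∂μ) ≤ ∫ x, f x * f x ^ β ∂μ := by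
  have hpoint : ∀ x, r * f x ^ β - r * r ^ (β - β₀) * f x ^ β₀ ≤ f x * f x ^ β := by
    intro x
    have hβx := Real.rpow_nonneg (hf0 x) β
    rcases lt_or_ge r (f x) with hlt | hle
    · have h₁ := mul_le_mul_of_nonneg_right hlt.le hβx
      have h₂ : 0 ≤ r * r ^ (β - β₀) * f x ^ β₀ :=
        mul_nonneg (mul_nonneg hr (Real.rpow_nonneg hr _)) (Real.rpow_nonneg (hf0 x) β₀)
      linarith
    · have h₁ := mul_le_mul_of_nonneg_left (Real.rpow_le_rpow_sub_mul_rpow (hf0 x) hle hβ₀ hβ) hr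
      have h₂ := mul_nonneg (hf0 x) hβx
      linarith
  calc r * ((∫ x, f x ^ β ∂μ) - r ^ (β - β₀) * ∫ x, f x ^ β₀ ∂μ)
      = ∫ x, r * f x ^ β - r * r ^ (β - β₀) * f x ^ β₀ ∂μ := by
        rw [integral_sub (hi.const_mul r) (hi₀.const_mul _), integral_const_mul,
          integral_const_mul]
        ring
    _ ≤ ∫ x, f x * f x ^ β ∂μ :=
        integral_mono ((hi.const_mul r).sub (hi₀.const_mul _)) hi' hpoint

lemma sub_rpow_mul_le_integral_mul_rpow_div (hS : MeasurableSet {x | f x = R})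
    (hSpos : 0 < μ.real {x | f x = R}) (hf0 : ∀ x, 0 ≤ f x) (hR : 0 < R) (hr : 0 < r)
    (hβ₀ : 0 ≤ β₀) (hβ : β₀ ≤ β) (hi₀ : Integrable (fun x => f x ^ β₀) μ)
    (hi : Integrable (fun x => f x ^ β) μ) (hi' : Integrable (fun x => f x * f x ^ β) μ) :
    r - (r / R) ^ β * (r * (∫ x, f x ^ β₀ ∂μ) / (r ^ β₀ * μ.real {x | f x = R})) ≤
      (∫ x, f x * f x ^ β ∂μ) / ∫ x, f x ^ β ∂μ := by
  set Z := ∫ x, f x ^ β ∂μ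
  set I₀ := ∫ x, f x ^ β₀ ∂μ
  set s := μ.real {x | f x = R}
  have hZ : R ^ β * s ≤ Z := rpow_mul_measureReal_le_integral_rpow hS hf0 hi
  have hRβ : 0 < R ^ β * s := mul_pos (Real.rpow_pos_of_pos hR β) hSpos
  have hI₀ : 0 ≤ r * r ^ (β - β₀) * I₀ :=
    mul_nonneg (by positivity) (integral_nonneg fun x => Real.rpow_nonneg (hf0 x) β₀)
  have hN := mul_sub_le_integral_mul_rpow hf0 hr.le hβ₀ hβ hi₀ hi hi'
  calc r - (r / R) ^ β * (r * I₀ / (r ^ β₀ * s)) = r - r * r ^ (β - β₀) * I₀ / (R ^ β * s) := by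
        rw [Real.div_rpow hr.le hR.le, Real.rpow_sub hr]
        field_simp
    _ ≤ r - r * r ^ (β - β₀) * I₀ / Z := by gcongr
    _ = r * (Z - r ^ (β - β₀) * I₀) / Z := by field_simp [(hRβ.trans_le hZ).ne']
    _ ≤ (∫ x, f x * f x ^ β ∂μ) / Z := by gcongr; exact hRβ.le.trans hZ

theorem tendsto_integral_mul_rpow_div_integral_rpow (hS : MeasurableSet {x | f x = R})
    (hSpos : 0 < μ {x | f x = R}) (hSfin : μ {x | f x = R} ≠ ⊤) (hf0 : ∀ x, 0 ≤ f x)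
    (hfR : ∀ x, f x ≤ R)
    (hint : ∀ᶠ β : ℝ in atTop,
      Integrable (fun x => f x ^ β) μ ∧ Integrable (fun x => f x * f x ^ β) μ) :
    Tendsto (fun β : ℝ => (∫ x, f x * f x ^ β ∂μ) / ∫ x, f x ^ β ∂μ) atTop (𝓝 R) := by
  obtain ⟨β₀, hβ₀⟩ := (hint.and (eventually_ge_atTop 0)).exists_forall_of_atTop
  have hβ₀0 : 0 ≤ β₀ := (hβ₀ β₀ le_rfl).2
  obtain ⟨x₀, hx₀ : f x₀ = R⟩ := nonempty_of_measure_ne_zero hSpos.ne'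
  have hR0 : 0 ≤ R := hx₀ ▸ hf0 x₀
  have hratio_nonneg : ∀ β : ℝ, 0 ≤ (∫ x, f x * f x ^ β ∂μ) / ∫ x, f x ^ β ∂μ := fun β =>
    div_nonneg (integral_nonneg fun x => mul_nonneg (hf0 x) (Real.rpow_nonneg (hf0 x) β))
      (integral_nonneg fun x => Real.rpow_nonneg (hf0 x) β)
  refine tendsto_order.2 ⟨fun r' hr' => ?_, fun r' hr' => ?_⟩
  · rcases lt_or_ge r' 0 with hneg | hr'0
    · exact Eventually.of_forall fun β => hneg.trans_le (hratio_nonneg β)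
    obtain ⟨r, hr'r, hrR⟩ := exists_between hr'
    have hr : 0 < r := hr'0.trans_lt hr'r
    set C := r * (∫ x, f x ^ β₀ ∂μ) / (r ^ β₀ * μ.real {x | f x = R})
    have hbound : Tendsto (fun β : ℝ => r - (r / R) ^ β * C) atTop (𝓝 r) := by
      simpa using tendsto_const_nhds.sub
        ((tendsto_rpow_atTop_of_base_lt_one _ (by linarith [div_nonneg hr.le hR0])
          ((div_lt_one (hr.trans hrR)).2 hrR)).mul_const C)
    filter_upwards [hbound.eventually (lt_mem_nhds hr'r), eventually_ge_atTop β₀]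
      with β hβr hβ
    exact hβr.trans_le (sub_rpow_mul_le_integral_mul_rpow_div hS
      (ENNReal.toReal_pos hSpos.ne' hSfin) hf0 (hr'0.trans_lt hr') hr hβ₀0 hβ
      (hβ₀ β₀ le_rfl).1.1 (hβ₀ β hβ).1.1 (hβ₀ β hβ).1.2)
  · filter_upwards [hint] with β hβ
    exact (div_le_of_le_mul₀ (integral_nonneg fun x => Real.rpow_nonneg (hf0 x) β) hR0
      (integral_mul_rpow_le_mul_integral_rpow hf0 hfR hβ.1)).trans_lt hr'

end TemperedMoments

theorem expected_reward_tendsto_Rmax_general {n : ℕ}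
    (f : (Fin n → ℝ) → ℝ) (Rmax : ℝ)
    (hnonneg : ∀ θ, 0 ≤ f θ)
    (hle : ∀ θ, f θ ≤ Rmax)
    (Sopt : Set (Fin n → ℝ)) (hSopt : Sopt = {θ | f θ = Rmax})
    (hSmeas : MeasurableSet Sopt)
    (hSpos : 0 < volume Sopt) (hSfin : volume Sopt < ⊤)
    (hint : ∀ᶠ T in nhdsWithin (0 : ℝ) (Set.Ioi 0),
      Integrable (fun θ => (f θ) ^ (1 / T)) (volume : Measure (Fin n → ℝ)) ∧
      Integrable (fun θ => f θ * (f θ) ^ (1 / T)) (volume : Measure (Fin n → ℝ))) :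
    Tendsto (fun T : ℝ => (∫ θ, f θ * (f θ) ^ (1 / T)) / ∫ θ, (f θ) ^ (1 / T))
      (nhdsWithin 0 (Set.Ioi 0)) (nhds Rmax) := by
  subst hSopt
  have hint' : ∀ᶠ β : ℝ in atTop, Integrable (fun θ => f θ ^ β) volume ∧
      Integrable (fun θ => f θ * f θ ^ β) volume :=
    (tendsto_inv_atTop_nhdsGT_zero.eventually hint).mono fun β h => by simpa using h
  have hinv : Tendsto (fun T : ℝ => 1 / T) (𝓝[>] 0) atTop := by
    simpa only [one_div] using tendsto_inv_nhdsGT_zero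
  exact (tendsto_integral_mul_rpow_div_integral_rpow hSmeas hSpos hSfin.ne hnonneg hle
    hint').comp hinv

/-- Under the same assumptions as in the zero-temperature limit of the
tempered distribution (`f` continuous, `0 ≤ f ≤ R_max`, `f^(1/T)` and `f·f^(1/T)` integrable,
`S_opt = {θ | f θ = R_max}` of positive finite measure, concentration of the superlevel sets),
the expected reward at temperature `T`,
`E[R_T] = ∫ f(θ)·f(θ)^(1/T) dθ / ∫ f(θ)^(1/T) dθ`, tends to `R_max` as `T → 0⁺`. -/
theorem expected_reward_tendsto_Rmax {n : ℕ}
    (f : (Fin n → ℝ) → ℝ) (Rmax : ℝ)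
    (hf : Continuous f)
    (hnonneg : ∀ θ, 0 ≤ f θ)
    (hle : ∀ θ, f θ ≤ Rmax)
    (Sopt : Set (Fin n → ℝ)) (hSopt : Sopt = {θ | f θ = Rmax})
    (hSmeas : MeasurableSet Sopt)
    (hSpos : 0 < volume Sopt) (hSfin : volume Sopt < ⊤)
    (hint : ∀ᶠ T in nhdsWithin (0 : ℝ) (Set.Ioi 0),
      Integrable (fun θ => (f θ) ^ (1 / T)) (volume : Measure (Fin n → ℝ)) ∧
      Integrable (fun θ => f θ * (f θ) ^ (1 / T)) (volume : Measure (Fin n → ℝ)))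
    (hsupp : volume (Function.support f) < ⊤)
    (hconc : Tendsto (fun ε : ℝ => volume {θ | Rmax - ε < f θ})
      (nhdsWithin 0 (Set.Ioi 0)) (nhds (volume Sopt))) :
    Tendsto (fun T : ℝ => (∫ θ, f θ * (f θ) ^ (1 / T)) / ∫ θ, (f θ) ^ (1 / T))
      (nhdsWithin 0 (Set.Ioi 0)) (nhds Rmax) :=
  expected_reward_tendsto_Rmax_general f Rmax hnonneg hle Sopt hSopt hSmeas hSpos hSfin hint
end

section
/- Let f : ℝⁿ → (0,1] be measurable with f^{1/T} and f^{1+1/T} integrable for all T in an interval. Then the expected reward E[R_T] = ∫ f^{1+1/T} dθ / ∫ f^{1/T} dθ is a nonincreasing function of T on that interval; equivalently, setting s = 1/T, the map s ↦ ∫ f^{s+1} / ∫ f^s is nondecreasing in s. -/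
/-!
By Hölder's inequality `s ↦ log ∫ f ^ s` is convex. For `s₁ ≤ s₂` the exponents `s₁ + 1` and `s₂`
are convex combinations of `s₁` and `s₂ + 1` with swapped weights `p, q`, so
`∫ f ^ (s₁ + 1) * ∫ f ^ s₂ ≤ (∫ f ^ s₁) ^ (p + q) * (∫ f ^ (s₂ + 1)) ^ (q + p)`,
which is the claimed monotonicity of the ratio after cross-multiplying.
-/

open MeasureTheory

open scoped ENNReal

section

variable {α : Type*} [MeasurableSpace α] {μ : Measure α}

theorem ENNReal.lintegral_rpow_mul_add_mul_le {F : α → ℝ≥0∞} (hF : AEMeasurable F μ)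
    (hF0 : ∀ᵐ x ∂μ, F x ≠ 0) (hFtop : ∀ᵐ x ∂μ, F x ≠ ∞) {p q : ℝ} (hp : 0 ≤ p) (hq : 0 ≤ q)
    (hpq : p + q = 1) (a b : ℝ) :
    ∫⁻ x, F x ^ (p * a + q * b) ∂μ ≤ (∫⁻ x, F x ^ a ∂μ) ^ p * (∫⁻ x, F x ^ b ∂μ) ^ q := by
  calc ∫⁻ x, F x ^ (p * a + q * b) ∂μ = ∫⁻ x, (F x ^ a) ^ p * (F x ^ b) ^ q ∂μ := by
        refine lintegral_congr_ae ((hF0.and hFtop).mono fun x hx => ?_)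
        simp only
        rw [← ENNReal.rpow_mul, ← ENNReal.rpow_mul, ← ENNReal.rpow_add _ _ hx.1 hx.2,
          mul_comm a, mul_comm b]
    _ ≤ _ := ENNReal.lintegral_mul_norm_pow_le (hF.pow_const a) (hF.pow_const b) hp hq hpq

theorem ENNReal.lintegral_rpow_add_one_mul_le {F : α → ℝ≥0∞} (hF : AEMeasurable F μ)
    (hF0 : ∀ᵐ x ∂μ, F x ≠ 0) (hFtop : ∀ᵐ x ∂μ, F x ≠ ∞) {s₁ s₂ : ℝ} (hs : s₁ ≤ s₂) :
    (∫⁻ x, F x ^ (s₁ + 1) ∂μ) * ∫⁻ x, F x ^ s₂ ∂μ ≤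
      (∫⁻ x, F x ^ s₁ ∂μ) * ∫⁻ x, F x ^ (s₂ + 1) ∂μ := by
  set A := ∫⁻ x, F x ^ s₁ ∂μ
  set B := ∫⁻ x, F x ^ (s₂ + 1) ∂μ
  -- the weights come from `s₁ + 1 = p * s₁ + q * (s₂ + 1)` and `s₂ = q * s₁ + p * (s₂ + 1)`
  have hδ : 0 < s₂ - s₁ + 1 := by linarith
  set p := (s₂ - s₁) / (s₂ - s₁ + 1)
  set q := 1 / (s₂ - s₁ + 1)
  have hp : 0 ≤ p := div_nonneg (by linarith) hδ.le
  have hq : 0 ≤ q := (one_div_pos.2 hδ).le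
  have hpq : p + q = 1 := by simp only [p, q]; field_simp
  have h₁ : ∫⁻ x, F x ^ (s₁ + 1) ∂μ ≤ A ^ p * B ^ q := by
    convert ENNReal.lintegral_rpow_mul_add_mul_le hF hF0 hFtop hp hq hpq s₁ (s₂ + 1) using 4
    simp only [p, q]; field_simp; ring
  have h₂ : ∫⁻ x, F x ^ s₂ ∂μ ≤ A ^ q * B ^ p := by
    convert ENNReal.lintegral_rpow_mul_add_mul_le hF hF0 hFtop hq hp (by linarith) s₁ (s₂ + 1)
      using 4
    simp only [p, q]; field_simp; ring
  calc (∫⁻ x, F x ^ (s₁ + 1) ∂μ) * ∫⁻ x, F x ^ s₂ ∂μ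
      ≤ A ^ p * B ^ q * (A ^ q * B ^ p) := mul_le_mul' h₁ h₂
    _ = A ^ (p + q) * B ^ (q + p) := by
        rw [ENNReal.rpow_add_of_nonneg _ _ hp hq, ENNReal.rpow_add_of_nonneg _ _ hq hp]; ring
    _ = A * B := by rw [hpq, add_comm q, hpq, ENNReal.rpow_one, ENNReal.rpow_one]

theorem integral_pos_of_ae_pos [NeZero μ] {g : α → ℝ} (hg : Integrable g μ)
    (hpos : ∀ᵐ x ∂μ, 0 < g x) : 0 < ∫ x, g x ∂μ := by
  rw [integral_pos_iff_support_of_nonneg_ae (hpos.mono fun _ hx => hx.le) hg]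
  refine pos_iff_ne_zero.2 fun h => ?_
  obtain ⟨x, hx, hx0⟩ := (hpos.and (measure_eq_zero_iff_ae_notMem.1 h)).exists
  exact hx0 hx.ne'

variable {f : α → ℝ}

theorem lintegral_ofReal_rpow_eq (hpos : ∀ᵐ x ∂μ, 0 < f x) (c : ℝ) :
    ∫⁻ x, ENNReal.ofReal (f x) ^ c ∂μ = ∫⁻ x, ENNReal.ofReal (f x ^ c) ∂μ :=
  lintegral_congr_ae (hpos.mono fun _ hx => ENNReal.ofReal_rpow_of_pos hx)

theorem integral_rpow_eq_toReal_lintegral (hf : AEMeasurable f μ) (hpos : ∀ᵐ x ∂μ, 0 < f x)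
    (c : ℝ) : ∫ x, f x ^ c ∂μ = (∫⁻ x, ENNReal.ofReal (f x) ^ c ∂μ).toReal := by
  rw [integral_eq_lintegral_of_nonneg_ae (hpos.mono fun _ hx => (Real.rpow_pos_of_pos hx c).le)
    (hf.pow_const c).aestronglyMeasurable, lintegral_ofReal_rpow_eq hpos]

theorem integral_rpow_add_one_div_integral_rpow_le [NeZero μ] (hf : AEMeasurable f μ)
    (hpos : ∀ᵐ x ∂μ, 0 < f x) {s₁ s₂ : ℝ} (hs : s₁ ≤ s₂)
    (hi₁ : Integrable (fun x => f x ^ s₁) μ) (hi₂ : Integrable (fun x => f x ^ s₂) μ)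
    (hi₂' : Integrable (fun x => f x ^ (s₂ + 1)) μ) :
    (∫ x, f x ^ (s₁ + 1) ∂μ) / (∫ x, f x ^ s₁ ∂μ) ≤
      (∫ x, f x ^ (s₂ + 1) ∂μ) / (∫ x, f x ^ s₂ ∂μ) := by
  have hpos_rpow (c : ℝ) : ∀ᵐ x ∂μ, 0 < f x ^ c := hpos.mono fun _ hx => Real.rpow_pos_of_pos hx c
  have hfin {c : ℝ} (hc : Integrable (fun x => f x ^ c) μ) :
      ∫⁻ x, ENNReal.ofReal (f x) ^ c ∂μ ≠ ∞ := by
    rw [lintegral_ofReal_rpow_eq hpos]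
    exact hc.lintegral_lt_top.ne
  have key := ENNReal.lintegral_rpow_add_one_mul_le hf.ennreal_ofReal
    (hpos.mono fun _ hx => ENNReal.ofReal_pos.2 hx |>.ne') (ae_of_all _ fun _ => ENNReal.ofReal_ne_top) hs
  rw [div_le_div_iff₀ (integral_pos_of_ae_pos hi₁ (hpos_rpow s₁))
    (integral_pos_of_ae_pos hi₂ (hpos_rpow s₂))]
  simp only [integral_rpow_eq_toReal_lintegral hf hpos, ← ENNReal.toReal_mul]
  exact ENNReal.toReal_mono (ENNReal.mul_ne_top (hfin hi₂') (hfin hi₁)) (key.trans_eq (mul_comm _ _))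

end

/-- Let `f : ℝⁿ → (0,1]` be measurable with `f^s` and `f^(s+1)` integrable
for all `s` in a set `I` (here `s = 1/T` is the inverse temperature).  Then the map
`s ↦ ∫ f^(s+1) / ∫ f^s` is nondecreasing in `s` on `I`; equivalently, the expected reward
`E[R_T] = ∫ f^(1+1/T) / ∫ f^(1/T)` is nonincreasing in the temperature `T`. -/
theorem expected_reward_monotone {n : ℕ}
    (f : (Fin n → ℝ) → ℝ)
    (hmeas : Measurable f)
    (hrange : ∀ θ, f θ ∈ Set.Ioc (0 : ℝ) 1)
    (I : Set ℝ)
    (hint : ∀ s ∈ I, Integrable (fun θ => (f θ) ^ s) (volume : Measure (Fin n → ℝ)) ∧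
      Integrable (fun θ => (f θ) ^ (s + 1)) (volume : Measure (Fin n → ℝ))) :
    (∀ s₁ ∈ I, ∀ s₂ ∈ I, s₁ ≤ s₂ →
      (∫ θ, (f θ) ^ (s₁ + 1)) / (∫ θ, (f θ) ^ s₁) ≤
      (∫ θ, (f θ) ^ (s₂ + 1)) / (∫ θ, (f θ) ^ s₂)) ∧
    (∀ T₁ > (0:ℝ), ∀ T₂ > (0:ℝ), 1 / T₁ ∈ I → 1 / T₂ ∈ I → T₁ ≤ T₂ →
      (∫ θ, (f θ) ^ (1 + 1 / T₂)) / (∫ θ, (f θ) ^ (1 / T₂)) ≤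
      (∫ θ, (f θ) ^ (1 + 1 / T₁)) / (∫ θ, (f θ) ^ (1 / T₁))) := by
  have mono : ∀ s₁ ∈ I, ∀ s₂ ∈ I, s₁ ≤ s₂ →
      (∫ θ, (f θ) ^ (s₁ + 1)) / (∫ θ, (f θ) ^ s₁) ≤
      (∫ θ, (f θ) ^ (s₂ + 1)) / (∫ θ, (f θ) ^ s₂) := fun s₁ h₁ s₂ h₂ hs =>
    integral_rpow_add_one_div_integral_rpow_le hmeas.aemeasurable
      (ae_of_all _ fun θ => (hrange θ).1) hs (hint s₁ h₁).1 (hint s₂ h₂).1 (hint s₂ h₂).2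
  refine ⟨mono, fun T₁ hT₁ T₂ _ h₁ h₂ hT => ?_⟩
  simpa only [add_comm (1 : ℝ)] using mono _ h₂ _ h₁ (one_div_le_one_div_of_le hT₁ hT)
end
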